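/- Let C* > 0, λ > 0, α > 0, and let x ∈ [0, C*]. Let γ_t, …, γ_k be positive reals with γ_j (C* + λ) ≤ 1 for all j. Define τ(x) = x^α ∏_{j=t}^{k} (1 − γ_j (x + λ)). Then 0 ≤ τ(x) and τ(x)² ≤ exp(−λ ∑_{j=t}^{k} γ_j) · ((α/e)^{2α} + C*^{2α}) / (1 + (∑_{j=t}^{k} γ_j)^{2α}). -/

import Mathlib

/-!
Since `1 - u ≤ e^{-u}`, the product is at most `e^{-(x + λ) S}` with `S = ∑ γ_j`, so
`τ(x)² ≤ e^{-λ S} · x^{2α} e^{-2xS}`. The factor `x^{2α} e^{-2xS}` is at most `C*^{2α}`, and after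
multiplying by `S^{2α}` it becomes `u^{2α} e^{-2u}` with `u = xS`, which is at most `(α/e)^{2α}`.
-/

open Real

theorem Real.prod_one_sub_le_exp_neg_sum {ι : Type*} (s : Finset ι) {f : ι → ℝ}
    (hf : ∀ i ∈ s, f i ≤ 1) : ∏ i ∈ s, (1 - f i) ≤ exp (-∑ i ∈ s, f i) := by
  rw [← Finset.sum_neg_distrib, exp_sum]
  exact Finset.prod_le_prod (fun i hi ↦ sub_nonneg.2 (hf i hi)) fun i _ ↦ one_sub_le_exp_neg _

/-- Equality holds at `v = a / b`; the inequality is `log y ≤ y - 1` at `y = b v / a`. -/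
theorem Real.rpow_mul_exp_neg_mul_le {a b v : ℝ} (ha : 0 < a) (hb : 0 < b) (hv : 0 ≤ v) :
    v ^ a * exp (-(b * v)) ≤ (a / (b * exp 1)) ^ a := by
  rcases hv.eq_or_lt with rfl | hv
  · rw [zero_rpow ha.ne', zero_mul]
    positivity
  rw [rpow_def_of_pos hv, rpow_def_of_pos (by positivity), ← exp_add, exp_le_exp,
    log_div ha.ne' (by positivity), log_mul hb.ne' (exp_ne_zero 1), log_exp]
  have hlog : log (b * v / a) ≤ b * v / a - 1 := log_le_sub_one_of_pos (by positivity)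
  rw [log_div (by positivity) ha.ne', log_mul hb.ne' hv.ne'] at hlog
  have hscaled : a * (log b + log v - log a) ≤ b * v - a := by
    calc a * (log b + log v - log a) ≤ a * (b * v / a - 1) := by gcongr
      _ = b * v - a := by field_simp
  linarith

theorem Real.rpow_mul_exp_neg_mul_le_div {a b x C S : ℝ} (ha : 0 < a) (hb : 0 < b) (hx : 0 ≤ x)
    (hxC : x ≤ C) (hS : 0 ≤ S) :
    x ^ a * exp (-(b * (x * S))) ≤ ((a / (b * exp 1)) ^ a + C ^ a) / (1 + S ^ a) := by
  rw [le_div_iff₀ (by positivity)]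
  have hsmall : x ^ a * exp (-(b * (x * S))) ≤ C ^ a := by
    calc x ^ a * exp (-(b * (x * S))) ≤ C ^ a * 1 :=
          mul_le_mul (rpow_le_rpow hx hxC ha.le) (exp_le_one_iff.2 (neg_nonpos.2 (by positivity)))
            (exp_pos _).le (rpow_nonneg (hx.trans hxC) a)
      _ = C ^ a := mul_one _
  have hlarge : x ^ a * exp (-(b * (x * S))) * S ^ a ≤ (a / (b * exp 1)) ^ a := by
    calc x ^ a * exp (-(b * (x * S))) * S ^ a = (x * S) ^ a * exp (-(b * (x * S))) := by
          rw [mul_rpow hx hS]; ring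
      _ ≤ (a / (b * exp 1)) ^ a := rpow_mul_exp_neg_mul_le ha hb (by positivity)
  linarith

theorem stmt1_general (Cstar lam α x : ℝ) (hlam : 0 < lam) (hα : 0 < α)
    (hx0 : 0 ≤ x) (hxC : x ≤ Cstar)
    (t k : ℕ) (γ : ℕ → ℝ)
    (hγpos : ∀ j ∈ Finset.Icc t k, 0 < γ j)
    (hγ : ∀ j ∈ Finset.Icc t k, γ j * (Cstar + lam) ≤ 1) :
    0 ≤ x ^ α * ∏ j ∈ Finset.Icc t k, (1 - γ j * (x + lam)) ∧
    (x ^ α * ∏ j ∈ Finset.Icc t k, (1 - γ j * (x + lam))) ^ 2 ≤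
      Real.exp (-(lam * ∑ j ∈ Finset.Icc t k, γ j)) *
        (((α / Real.exp 1) ^ (2 * α) + Cstar ^ (2 * α)) /
          (1 + (∑ j ∈ Finset.Icc t k, γ j) ^ (2 * α))) := by
  set S := ∑ j ∈ Finset.Icc t k, γ j
  set P := ∏ j ∈ Finset.Icc t k, (1 - γ j * (x + lam))
  have hS : 0 ≤ S := Finset.sum_nonneg fun j hj ↦ (hγpos j hj).le
  have hfac : ∀ j ∈ Finset.Icc t k, γ j * (x + lam) ≤ 1 := fun j hj ↦
    le_trans (by gcongr; exact (hγpos j hj).le) (hγ j hj)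
  have hP0 : 0 ≤ P := Finset.prod_nonneg fun j hj ↦ sub_nonneg.2 (hfac j hj)
  have hPexp : P ≤ exp (-(S * (x + lam))) := by
    simpa only [S, Finset.sum_mul] using prod_one_sub_le_exp_neg_sum _ hfac
  have hdecay : exp (-(lam * S)) ≤ 1 := exp_le_one_iff.2 (neg_nonpos.2 (by positivity))
  refine ⟨mul_nonneg (rpow_nonneg hx0 α) hP0, ?_⟩
  calc (x ^ α * P) ^ 2 = x ^ (2 * α) * P ^ 2 := by
        rw [mul_pow, ← rpow_natCast, ← rpow_mul hx0, mul_comm α]; norm_num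
    _ ≤ x ^ (2 * α) * exp (-(S * (x + lam))) ^ 2 := by gcongr
    _ = exp (-(lam * S)) * exp (-(lam * S)) * (x ^ (2 * α) * exp (-(2 * (x * S)))) := by
        have hsplit : exp (-(S * (x + lam))) ^ 2 =
            exp (-(lam * S)) * exp (-(lam * S)) * exp (-(2 * (x * S))) := by
          rw [← exp_add, ← exp_add, ← exp_nat_mul]; ring_nf
        rw [hsplit]; ring
    _ ≤ 1 * exp (-(lam * S)) * (x ^ (2 * α) * exp (-(2 * (x * S)))) := by gcongr
    _ ≤ exp (-(lam * S)) * (((α / exp 1) ^ (2 * α) + Cstar ^ (2 * α)) / (1 + S ^ (2 * α))) := by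
        rw [one_mul, ← mul_div_mul_left α (exp 1) two_ne_zero]
        gcongr
        exact rpow_mul_exp_neg_mul_le_div (by positivity) two_pos hx0 hxC hS

/-- Pointwise polynomial estimate: for `x ∈ [0, C*]`,
`τ(x) = x^α ∏_{j=t}^k (1 − γ_j (x + λ))` satisfies `0 ≤ τ(x)` and
`τ(x)² ≤ exp(−λ ∑ γ_j) ((α/e)^{2α} + C*^{2α}) / (1 + (∑ γ_j)^{2α})`. -/
theorem stmt1 (Cstar lam α x : ℝ) (hCstar : 0 < Cstar) (hlam : 0 < lam) (hα : 0 < α)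
    (hx0 : 0 ≤ x) (hxC : x ≤ Cstar)
    (t k : ℕ) (γ : ℕ → ℝ)
    (hγpos : ∀ j ∈ Finset.Icc t k, 0 < γ j)
    (hγ : ∀ j ∈ Finset.Icc t k, γ j * (Cstar + lam) ≤ 1) :
    0 ≤ x ^ α * ∏ j ∈ Finset.Icc t k, (1 - γ j * (x + lam)) ∧
    (x ^ α * ∏ j ∈ Finset.Icc t k, (1 - γ j * (x + lam))) ^ 2 ≤
      Real.exp (-(lam * ∑ j ∈ Finset.Icc t k, γ j)) *
        (((α / Real.exp 1) ^ (2 * α) + Cstar ^ (2 * α)) /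
          (1 + (∑ j ∈ Finset.Icc t k, γ j) ^ (2 * α))) :=
  stmt1_general Cstar lam α x hlam hα hx0 hxC t k γ hγpos hγ
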